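/- arXiv:2112.12257 — 3 statements merged into one kernel-verified Lean document; each statement's English description precedes it below -/
import Mathlib

section
/- Let 0 ≤ t ≤ T, C > 0, B ≥ 0, let (g_k)_{k∈ℕ} be a sequence of measurable functions g_k : [t,T] → ℝ with 0 ≤ g_k(r) ≤ B for all k and r, and let (δ_k)_{k∈ℕ} be nonnegative reals with δ_k → 0. Assume that for every k and every r ∈ [t,T], g_k(r) ≤ C ∫_t^r ( √(g_k(s)) + δ_k² ) ds. Then the function g(r) := limsup_{k→∞} g_k(r) satisfies g(r) ≤ C ∫_t^r √(g(s)) ds for all r ∈ [t,T]. -/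
open Filter MeasureTheory

private lemma ofReal_sqrt_limsup_eq {u : ℕ → ℝ} {B : ℝ}
    (h0 : ∀ k, 0 ≤ u k) (hB : ∀ k, u k ≤ B) :
    ENNReal.ofReal (Real.sqrt (limsup u atTop))
      = limsup (fun k => ENNReal.ofReal (Real.sqrt (u k))) atTop := by
  have hmono : Monotone fun x : ℝ => ENNReal.ofReal (Real.sqrt x) :=
    fun a b h => ENNReal.ofReal_le_ofReal (Real.sqrt_le_sqrt h)
  have hcont : ContinuousAt (fun x : ℝ => ENNReal.ofReal (Real.sqrt x)) (limsup u atTop) :=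
    (ENNReal.continuous_ofReal.comp Real.continuous_sqrt).continuousAt
  exact hmono.map_limsup_of_continuousAt u hcont
    (Filter.isBoundedUnder_of ⟨B, hB⟩)
    (Filter.isCoboundedUnder_le_of_le atTop (x := 0) h0)

/-- The reverse-Fatou limit step: if uniformly bounded nonnegative measurable functions `g_k`
satisfy `g_k(r) ≤ C ∫_t^r (√(g_k(s)) + δ_k²) ds` with `δ_k → 0`, then
`g(r) := limsup_k g_k(r)` satisfies `g(r) ≤ C ∫_t^r √(g(s)) ds` on `[t,T]`. -/
theorem limsup_osgood_inequality
    (t T : ℝ) (ht : 0 ≤ t) (htT : t ≤ T) (C : ℝ) (hC : 0 < C) (B : ℝ) (hB : 0 ≤ B)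
    (g : ℕ → ℝ → ℝ) (hmeas : ∀ k, Measurable (g k))
    (hbdd : ∀ k, ∀ r ∈ Set.Icc t T, 0 ≤ g k r ∧ g k r ≤ B)
    (δ : ℕ → ℝ) (hδ : ∀ k, 0 ≤ δ k) (hδ0 : Tendsto δ atTop (nhds 0))
    (hineq : ∀ k, ∀ r ∈ Set.Icc t T,
      g k r ≤ C * ∫ s in t..r, (Real.sqrt (g k s) + (δ k) ^ 2)) :
    ∀ r ∈ Set.Icc t T,
      limsup (fun k => g k r) atTop
        ≤ C * ∫ s in t..r, Real.sqrt (limsup (fun k => g k s) atTop) := by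
  intro r hr
  obtain ⟨htr, hrT⟩ := hr
  have hsub : Set.Ioc t r ⊆ Set.Icc t T := fun s hs => ⟨hs.1.le, hs.2.trans hrT⟩
  -- the ennreal limsup function
  set H : ℝ → ENNReal := fun s => limsup (fun k => ENNReal.ofReal (Real.sqrt (g k s))) atTop
    with hHdef
  have hsqmeas : ∀ k, Measurable fun s => ENNReal.ofReal (Real.sqrt (g k s)) :=
    fun k => ENNReal.measurable_ofReal.comp (hmeas k).sqrt
  have hHmeas : Measurable H := Measurable.limsup hsqmeas
  have hkey : ∀ s ∈ Set.Icc t T,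
      H s = ENNReal.ofReal (Real.sqrt (limsup (fun k => g k s) atTop)) := by
    intro s hs
    exact (ofReal_sqrt_limsup_eq (fun k => (hbdd k s hs).1) (fun k => (hbdd k s hs).2)).symm
  set L : ENNReal := ∫⁻ s in Set.Ioc t r, H s with hLdef
  -- boundedness / finiteness of L
  have hHbd : ∀ s ∈ Set.Ioc t r, H s ≤ ENNReal.ofReal (Real.sqrt B) := by
    intro s hs
    refine Filter.limsup_le_of_le (by isBoundedDefault) (Eventually.of_forall fun k => ?_)
    exact ENNReal.ofReal_le_ofReal (Real.sqrt_le_sqrt (hbdd k s (hsub hs)).2)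
  have hLle : L ≤ ENNReal.ofReal (Real.sqrt B) * volume (Set.Ioc t r) := by
    calc L ≤ ∫⁻ _ in Set.Ioc t r, ENNReal.ofReal (Real.sqrt B) := by
          refine lintegral_mono_ae ?_
          filter_upwards [ae_restrict_mem measurableSet_Ioc] with s hs using hHbd s hs
      _ = ENNReal.ofReal (Real.sqrt B) * volume (Set.Ioc t r) := by
          rw [setLIntegral_const]
  have hLfin : L ≠ ⊤ := by
    refine ne_top_of_le_ne_top ?_ hLle
    exact ENNReal.mul_ne_top ENNReal.ofReal_ne_top (by simp [Real.volume_Ioc])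
  -- the interval integral of the limsup equals L.toReal
  have hI : (∫ s in t..r, Real.sqrt (limsup (fun k => g k s) atTop)) = L.toReal := by
    rw [intervalIntegral.integral_of_le htr]
    have haemeas : AEMeasurable (fun s => Real.sqrt (limsup (fun k => g k s) atTop))
        (volume.restrict (Set.Ioc t r)) := by
      refine (hHmeas.ennreal_toReal.aemeasurable).congr ?_
      filter_upwards [ae_restrict_mem measurableSet_Ioc] with s hs
      rw [hkey s (hsub hs), ENNReal.toReal_ofReal (Real.sqrt_nonneg _)]
    rw [integral_eq_lintegral_of_nonneg_ae (Eventually.of_forall fun s => Real.sqrt_nonneg _)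
      haemeas.aestronglyMeasurable]
    congr 1
    refine lintegral_congr_ae ?_
    filter_upwards [ae_restrict_mem measurableSet_Ioc] with s hs
    exact (hkey s (hsub hs)).symm
  rw [hI]
  -- reverse Fatou
  have hfatou : limsup (fun k => ∫⁻ s in Set.Ioc t r, ENNReal.ofReal (Real.sqrt (g k s)))
      atTop ≤ L := by
    refine limsup_lintegral_le (fun _ => ENNReal.ofReal (Real.sqrt B)) hsqmeas
      (fun k => ?_) ?_
    · filter_upwards [ae_restrict_mem measurableSet_Ioc] with s hs
      exact ENNReal.ofReal_le_ofReal (Real.sqrt_le_sqrt (hbdd k s (hsub hs)).2)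
    · rw [setLIntegral_const]
      exact ENNReal.mul_ne_top ENNReal.ofReal_ne_top (by simp [Real.volume_Ioc])
  -- epsilon argument
  refine le_of_forall_pos_le_add fun ε hε => ?_
  set ε₁ := ε / (2 * C * (T - t + 1)) with hε₁def
  set ε₂ := ε / (2 * C) with hε₂def
  have hTt : (0:ℝ) < T - t + 1 := by linarith
  have hε₁ : 0 < ε₁ := by positivity
  have hε₂ : 0 < ε₂ := by positivity
  have h1 : ∀ᶠ k in atTop, δ k ^ 2 < ε₁ := by
    have hsq : Tendsto (fun k => δ k ^ 2) atTop (nhds 0) := by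
      have := hδ0.pow 2
      simpa using this
    exact hsq.eventually_lt_const hε₁
  have h2 : ∀ᶠ k in atTop,
      (∫⁻ s in Set.Ioc t r, ENNReal.ofReal (Real.sqrt (g k s))) < L + ENNReal.ofReal ε₂ := by
    refine Filter.eventually_lt_of_limsup_lt (lt_of_le_of_lt hfatou ?_)
    exact ENNReal.lt_add_right hLfin (by simpa [ENNReal.ofReal_pos] using hε₂)
  refine Filter.limsup_le_of_le
    (Filter.isCoboundedUnder_le_of_le atTop (x := 0) fun k => (hbdd k r ⟨htr, hrT⟩).1) ?_
  filter_upwards [h1, h2] with k hk1 hk2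
  -- interval integrability
  have hsqint : IntervalIntegrable (fun s => Real.sqrt (g k s)) volume t r := by
    rw [intervalIntegrable_iff_integrableOn_Ioc_of_le htr]
    refine ⟨((hmeas k).sqrt).aestronglyMeasurable, ?_⟩
    refine HasFiniteIntegral.of_bounded (C := Real.sqrt B) ?_
    filter_upwards [ae_restrict_mem measurableSet_Ioc] with s hs
    rw [Real.norm_eq_abs, abs_of_nonneg (Real.sqrt_nonneg _)]
    exact Real.sqrt_le_sqrt (hbdd k s (hsub hs)).2
  have hsplit : (∫ s in t..r, (Real.sqrt (g k s) + (δ k) ^ 2))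
      = (∫ s in t..r, Real.sqrt (g k s)) + (r - t) * δ k ^ 2 := by
    rw [intervalIntegral.integral_add hsqint intervalIntegrable_const,
      intervalIntegral.integral_const, smul_eq_mul]
  -- relate ∫ √g_k to its lintegral
  have hkint : (∫ s in t..r, Real.sqrt (g k s))
      = (∫⁻ s in Set.Ioc t r, ENNReal.ofReal (Real.sqrt (g k s))).toReal := by
    rw [intervalIntegral.integral_of_le htr]
    rw [integral_eq_lintegral_of_nonneg_ae (Eventually.of_forall fun s => Real.sqrt_nonneg _)
      ((hmeas k).sqrt).aestronglyMeasurable]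
  have hkle : (∫ s in t..r, Real.sqrt (g k s)) ≤ L.toReal + ε₂ := by
    rw [hkint]
    have := ENNReal.toReal_mono (ENNReal.add_ne_top.mpr ⟨hLfin, ENNReal.ofReal_ne_top⟩) hk2.le
    rwa [ENNReal.toReal_add hLfin ENNReal.ofReal_ne_top,
      ENNReal.toReal_ofReal hε₂.le] at this
  have hrt : 0 ≤ r - t := by linarith
  have hmain := hineq k r ⟨htr, hrT⟩
  rw [hsplit] at hmain
  have hδbd : (r - t) * δ k ^ 2 ≤ (T - t + 1) * ε₁ := by
    have h1' : (r - t) * δ k ^ 2 ≤ (r - t) * ε₁ :=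
      mul_le_mul_of_nonneg_left hk1.le hrt
    have h2' : (r - t) * ε₁ ≤ (T - t + 1) * ε₁ := by
      apply mul_le_mul_of_nonneg_right _ hε₁.le
      linarith
    linarith
  have hfin : C * ((L.toReal + ε₂) + (T - t + 1) * ε₁) = C * L.toReal + ε := by
    rw [hε₂def, hε₁def]
    field_simp
    ring
  calc g k r ≤ C * ((∫ s in t..r, Real.sqrt (g k s)) + (r - t) * δ k ^ 2) := hmain
    _ ≤ C * ((L.toReal + ε₂) + (T - t + 1) * ε₁) := by
        apply mul_le_mul_of_nonneg_left _ hC.le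
        linarith
    _ = C * L.toReal + ε := hfin
end

section
/- Let 0 ≤ t ≤ T, C > 0, B ≥ 0, δ ≥ 0, and let g : [t,T] → ℝ be measurable with 0 ≤ g(r) ≤ B for all r. Assume that g(r) ≤ C ∫_t^r ( g(s) + √(g(s)) + δ² ) ds for all r ∈ [t,T]. Then there exists a constant C′ > 0, depending only on C and T − t, such that g(r) ≤ C′ ∫_t^r ( √(g(s)) + δ² ) ds for all r ∈ [t,T]. -/
open MeasureTheory

/-- The Gronwall-type reduction step: an integral inequality with the linear term `g(s)` can be
reduced to one without it, at the price of a constant depending only on `C` and `T − t`. -/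
theorem gronwall_reduction_step :
    ∀ C : ℝ, 0 < C → ∀ s : ℝ, 0 ≤ s → ∃ C' : ℝ, 0 < C' ∧
      ∀ t T : ℝ, 0 ≤ t → t ≤ T → T - t = s → ∀ B : ℝ, 0 ≤ B → ∀ δ : ℝ, 0 ≤ δ →
      ∀ g : ℝ → ℝ, Measurable g →
      (∀ r ∈ Set.Icc t T, 0 ≤ g r ∧ g r ≤ B) →
      (∀ r ∈ Set.Icc t T, g r ≤ C * ∫ u in t..r, (g u + Real.sqrt (g u) + δ ^ 2)) →
      ∀ r ∈ Set.Icc t T, g r ≤ C' * ∫ u in t..r, (Real.sqrt (g u) + δ ^ 2) := by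
  intro C hC s hs
  refine ⟨C * Real.exp (C * s), by positivity, ?_⟩
  intro t T ht0 htT hTs B hB δ hδ g hg hbd hineq
  set f : ℝ → ℝ := fun u => Real.sqrt (g u) + δ ^ 2 with hfdef
  have hfnn : ∀ u, 0 ≤ f u := fun u => add_nonneg (Real.sqrt_nonneg _) (sq_nonneg _)
  -- interval integrability of g
  have hgInt : ∀ r, t ≤ r → r ≤ T → IntervalIntegrable g volume t r := by
    intro r htr hrT
    rw [intervalIntegrable_iff_integrableOn_Ioc_of_le htr]
    apply Measure.integrableOn_of_bounded (M := B) measure_Ioc_lt_top.ne hg.aestronglyMeasurable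
    filter_upwards [ae_restrict_mem measurableSet_Ioc] with x hx
    have := hbd x ⟨le_of_lt hx.1, hx.2.trans hrT⟩
    rw [Real.norm_eq_abs, abs_of_nonneg this.1]; exact this.2
  -- interval integrability of f
  have hfm : Measurable f := (Measurable.sqrt hg).add measurable_const
  have hfInt : ∀ r, t ≤ r → r ≤ T → IntervalIntegrable f volume t r := by
    intro r htr hrT
    rw [intervalIntegrable_iff_integrableOn_Ioc_of_le htr]
    apply Measure.integrableOn_of_bounded (M := Real.sqrt B + δ ^ 2) measure_Ioc_lt_top.ne
      hfm.aestronglyMeasurable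
    filter_upwards [ae_restrict_mem measurableSet_Ioc] with x hx
    have hx' := hbd x ⟨le_of_lt hx.1, hx.2.trans hrT⟩
    rw [Real.norm_eq_abs, abs_of_nonneg (hfnn x)]
    exact add_le_add (Real.sqrt_le_sqrt hx'.2) le_rfl
  -- nonnegativity and monotonicity of the integral of f
  have hInn : ∀ r, t ≤ r → 0 ≤ ∫ u in t..r, f u := by
    intro r htr
    apply intervalIntegral.integral_nonneg htr
    intro u _; exact hfnn u
  have hImono : ∀ a b, t ≤ a → a ≤ b → b ≤ T → (∫ u in t..a, f u) ≤ ∫ u in t..b, f u := by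
    intro a b hta hab hbT
    apply intervalIntegral.integral_mono_interval le_rfl hta hab
    · filter_upwards with x using hfnn x
    · exact hfInt b (hta.trans hab) hbT
  -- computing the integral of powers
  have hpow : ∀ r : ℝ, ∀ k : ℕ, ∫ u in t..r, (u - t)^k = (r - t)^(k+1)/(k+1) := by
    intro r k
    rw [intervalIntegral.integral_comp_sub_right (fun x => x^k) t, integral_pow]
    simp
  -- the key induction
  have key : ∀ n : ℕ, ∀ r ∈ Set.Icc t T, g r ≤
      B * (C * (r - t))^n / n.factorial +
      C * (∑ k ∈ Finset.range n, (C * (r - t))^k / k.factorial) * ∫ u in t..r, f u := by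
    intro n
    induction n with
    | zero =>
      intro r hr
      simpa using (hbd r hr).2
    | succ n ih =>
      intro r hr
      obtain ⟨htr, hrT⟩ := hr
      set I := ∫ u in t..r, f u with hI
      have hInnr : 0 ≤ I := hInn r htr
      -- the polynomial majorant
      set φ : ℝ → ℝ := fun u => B * C^n / n.factorial * (u - t)^n +
        ∑ k ∈ Finset.range n, (C * I * C^k / k.factorial) * (u - t)^k with hφdef
      have hφcont : Continuous φ := by
        apply Continuous.add
        · exact continuous_const.mul ((continuous_id.sub continuous_const).pow n)
        · apply continuous_finset_sum
          intro k _
          exact continuous_const.mul ((continuous_id.sub continuous_const).pow k)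
      have hφInt : IntervalIntegrable φ volume t r := hφcont.intervalIntegrable t r
      -- pointwise bound g ≤ φ on [t, r]
      have hptw : ∀ u ∈ Set.Icc t r, g u ≤ φ u := by
        intro u hu
        have huT : u ∈ Set.Icc t T := ⟨hu.1, hu.2.trans hrT⟩
        have hIu : (∫ v in t..u, f v) ≤ I := hImono u r hu.1 hu.2 hrT
        calc g u ≤ B * (C * (u - t))^n / n.factorial +
            C * (∑ k ∈ Finset.range n, (C * (u - t))^k / k.factorial) * ∫ v in t..u, f v :=
              ih u huT
          _ ≤ φ u := by
            apply add_le_add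
            · rw [mul_pow]; ring_nf; exact le_rfl
            · rw [Finset.mul_sum, Finset.sum_mul]
              apply Finset.sum_le_sum
              intro k _
              have h1 : 0 ≤ (C * (u - t))^k / k.factorial := by
                apply div_nonneg (pow_nonneg _ _) (Nat.cast_nonneg _)
                exact mul_nonneg hC.le (sub_nonneg.mpr hu.1)
              have h2 : C * ((C * (u - t))^k / k.factorial) * (∫ v in t..u, f v)
                  ≤ C * ((C * (u - t))^k / k.factorial) * I :=
                mul_le_mul_of_nonneg_left hIu (mul_nonneg hC.le h1)
              refine h2.trans (le_of_eq ?_)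
              rw [mul_pow]; ring
      -- integrate the pointwise bound
      have hgφ : (∫ u in t..r, g u) ≤ ∫ u in t..r, φ u :=
        intervalIntegral.integral_mono_on htr (hgInt r htr hrT) hφInt hptw
      -- compute ∫ φ
      have hφval : (∫ u in t..r, φ u) = B * C^n / n.factorial * ((r - t)^(n+1)/(n+1)) +
          ∑ k ∈ Finset.range n, (C * I * C^k / k.factorial) * ((r - t)^(k+1)/(k+1)) := by
        rw [hφdef]
        beta_reduce
        have hInt1 : IntervalIntegrable
            (fun u : ℝ => B * C ^ n / ↑n.factorial * (u - t) ^ n) volume t r :=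
          Continuous.intervalIntegrable (by fun_prop) t r
        have hInt2 : IntervalIntegrable (fun u : ℝ =>
            ∑ k ∈ Finset.range n, C * I * C ^ k / ↑k.factorial * (u - t) ^ k) volume t r :=
          Continuous.intervalIntegrable (continuous_finset_sum _
            (fun k _ => by fun_prop)) t r
        have hInt3 : ∀ k ∈ Finset.range n, IntervalIntegrable
            (fun u : ℝ => C * I * C ^ k / ↑k.factorial * (u - t) ^ k) volume t r :=
          fun k _ => Continuous.intervalIntegrable (by fun_prop) t r
        rw [intervalIntegral.integral_add hInt1 hInt2,
          intervalIntegral.integral_const_mul, hpow r n,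
          intervalIntegral.integral_finset_sum hInt3]
        congr 1
        apply Finset.sum_congr rfl
        intro k _
        rw [intervalIntegral.integral_const_mul, hpow r k]
      -- split the original inequality
      have hsplit : g r ≤ C * ((∫ u in t..r, g u) + I) := by
        have h1 := hineq r ⟨htr, hrT⟩
        have h2 : (∫ u in t..r, (g u + Real.sqrt (g u) + δ ^ 2)) =
            (∫ u in t..r, g u) + I := by
          rw [hI, hfdef]
          rw [← intervalIntegral.integral_add (hgInt r htr hrT) (hfInt r htr hrT)]
          apply intervalIntegral.integral_congr
          intro u _; ring
        rwa [h2] at h1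
      calc g r ≤ C * ((∫ u in t..r, g u) + I) := hsplit
        _ ≤ C * ((∫ u in t..r, φ u) + I) := by
            apply mul_le_mul_of_nonneg_left _ hC.le
            exact add_le_add hgφ le_rfl
        _ = B * (C * (r - t))^(n+1) / (n+1).factorial +
            C * (∑ k ∈ Finset.range (n+1), (C * (r - t))^k / k.factorial) * I := by
            rw [hφval, Finset.sum_range_succ', mul_pow]
            push_cast [Nat.factorial_succ]
            have hsum : (∑ k ∈ Finset.range n,
                C * I * C^k / (k.factorial : ℝ) * ((r - t)^(k+1)/((k:ℝ)+1)))
                = I * ∑ k ∈ Finset.range n,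
                  (C * (r - t))^(k+1)/(((k:ℝ)+1) * (k.factorial : ℝ)) := by
              rw [Finset.mul_sum]
              apply Finset.sum_congr rfl
              intro k _
              have hk : ((k:ℝ)+1) ≠ 0 := by positivity
              have hkf : ((k.factorial : ℝ)) ≠ 0 := Nat.cast_ne_zero.mpr (Nat.factorial_ne_zero k)
              rw [mul_pow]
              field_simp
              ring
            rw [hsum]
            have hnf : ((n.factorial : ℝ)) ≠ 0 := Nat.cast_ne_zero.mpr (Nat.factorial_ne_zero n)
            have hn1 : ((n:ℝ)+1) ≠ 0 := by positivity
            simp only [pow_zero, Nat.factorial_zero, Nat.cast_one, div_one]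
            field_simp
            ring
  -- pass to the limit n → ∞
  intro r hr
  obtain ⟨htr, hrT⟩ := hr
  have hrts : r - t ≤ s := by rw [← hTs]; linarith [hrT]
  have hrt0 : 0 ≤ r - t := sub_nonneg.mpr htr
  have hInnr : 0 ≤ ∫ u in t..r, f u := hInn r htr
  have hbound : ∀ n : ℕ, g r ≤ B * ((C * s)^n / n.factorial) +
      (C * Real.exp (C * s)) * ∫ u in t..r, f u := by
    intro n
    refine (key n r ⟨htr, hrT⟩).trans (add_le_add ?_ ?_)
    · rw [mul_div_assoc]
      apply mul_le_mul_of_nonneg_left _ hB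
      apply div_le_div_of_nonneg_right _ _
      · exact pow_le_pow_left₀ (by positivity) (by nlinarith) n
      · exact (Nat.cast_pos.mpr (Nat.factorial_pos n)).le
    · apply mul_le_mul_of_nonneg_right _ hInnr
      apply mul_le_mul_of_nonneg_left _ hC.le
      calc (∑ k ∈ Finset.range n, (C * (r - t))^k / k.factorial)
          ≤ ∑ k ∈ Finset.range n, (C * s)^k / k.factorial := by
            apply Finset.sum_le_sum
            intro k _
            apply div_le_div_of_nonneg_right _ _
            · exact pow_le_pow_left₀ (by positivity) (by nlinarith) k
            · exact (Nat.cast_pos.mpr (Nat.factorial_pos k)).le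
        _ ≤ Real.exp (C * s) := Real.sum_le_exp_of_nonneg (by positivity) n
  have htend : Filter.Tendsto
      (fun n : ℕ => B * ((C * s)^n / n.factorial) + (C * Real.exp (C * s)) * ∫ u in t..r, f u)
      Filter.atTop (nhds ((C * Real.exp (C * s)) * ∫ u in t..r, f u)) := by
    have h0 : Filter.Tendsto (fun n : ℕ => B * ((C * s)^n / n.factorial))
        Filter.atTop (nhds 0) := by
      have := (FloorSemiring.tendsto_pow_div_factorial_atTop (C * s)).const_mul B
      simpa using this
    simpa using h0.add tendsto_const_nhds
  exact ge_of_tendsto' htend hbound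
end

section
/- Let T > 0 and t ∈ [0,T] with T − t = 1. Then for every c ∈ ℝ, the functions X(r) = c(r−t) and Y(r) = c, r ∈ [t,T], satisfy X(r) = 0 + ∫_t^r Y(s) ds and Y(r) = X(T) for all r ∈ [t,T]; in particular, the system with initial value x = 0 and duration T − t = 1 admits infinitely many continuous solutions. -/
/-- Non-uniqueness for the deterministic forward–backward system at the critical duration
`T − t = 1` and zero initial value: for every `c`, `X(r) = c(r−t)`, `Y ≡ c` is a solution, and
there are infinitely many continuous solutions. -/
theorem fbode_nonuniqueness
    (T t : ℝ) (hT : 0 < T) (ht : t ∈ Set.Icc (0 : ℝ) T) (hTt : T - t = 1) :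
    (∀ c : ℝ, ∀ r ∈ Set.Icc t T,
      (c * (r - t) = 0 + ∫ _s in t..r, c) ∧ (c = c * (T - t))) ∧
    Set.Infinite {p : (ℝ → ℝ) × (ℝ → ℝ) |
      ContinuousOn p.1 (Set.Icc t T) ∧ ContinuousOn p.2 (Set.Icc t T) ∧
      (∀ r ∈ Set.Icc t T, p.1 r = 0 + ∫ s in t..r, p.2 s) ∧
      (∀ r ∈ Set.Icc t T, p.2 r = p.1 T)} := by
  constructor
  · intro c r hr
    constructor
    · rw [intervalIntegral.integral_const, smul_eq_mul]
      ring
    · rw [hTt]; ring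
  · apply Set.infinite_of_injective_forall_mem
      (f := fun c : ℝ => ((fun r => c * (r - t), fun _ => c) : (ℝ → ℝ) × (ℝ → ℝ)))
    case hi =>
      intro a b hab
      have := congrArg (fun p : (ℝ → ℝ) × (ℝ → ℝ) => p.2 0) hab
      simpa using this
    case hf =>
      intro c
      refine ⟨(by fun_prop), continuousOn_const, ?_, ?_⟩
      · intro r hr
        rw [intervalIntegral.integral_const, smul_eq_mul]
        ring
      · intro r hr
        simp [hTt]
end
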